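/- arXiv:2202.06311 — 2 statements merged into one kernel-verified Lean document; each statement's English description precedes it below -/
import Mathlib

section
/- For every k ≥ 2, if v ≡ 1 (mod k−1) and v ≥ k(k−1)² + k, then β(1,v,k) = (v−1)/(k−1). -/
/-!
If no two blocks of a `(v,k)`-packing are disjoint, either some point `x` lies on more than `k`
blocks, or every point lies on at most `k` blocks. In the first case every block passes through
`x`: a block missing `x` would meet the blocks through `x` in pairwise distinct points, more than
`k` of them. The blocks through `x` are disjoint away from `x`, so there are at most
`(v - 1) / (k - 1)` of them. In the second case every block meets a fixed block `b₀`, which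
leaves at most `k (k - 1) + 1` blocks, and `v ≥ k (k - 1)² + k` makes this at most
`(v - 1) / (k - 1)` as well. Conversely, `(v - 1) / (k - 1)` blocks through a common point that
are disjoint away from it form such a packing.
-/

/-- A `(v,k)`-packing: a family of `k`-subsets of a `v`-set such that
every pair of points occurs in at most one block. -/
def IsPacking (v k : ℕ) (B : Finset (Finset (Fin v))) : Prop :=
  (∀ b ∈ B, b.card = k) ∧
    ∀ b₁ ∈ B, ∀ b₂ ∈ B, b₁ ≠ b₂ → (b₁ ∩ b₂).card ≤ 1

/-- A partial parallel class: a set of pairwise disjoint blocks of the packing. -/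
def IsPPC {v : ℕ} (B P : Finset (Finset (Fin v))) : Prop :=
  P ⊆ B ∧ ∀ b₁ ∈ P, ∀ b₂ ∈ P, b₁ ≠ b₂ → Disjoint b₁ b₂

/-- The maximum PPC of `B` has size `ρ`. -/
def MaxPPCSize {v : ℕ} (B : Finset (Finset (Fin v))) (ρ : ℕ) : Prop :=
  (∃ P, IsPPC B P ∧ P.card = ρ) ∧ ∀ P, IsPPC B P → P.card ≤ ρ

/-- `β(ρ,v,k)`: the maximum number of blocks in a `(v,k)`-packing whose
maximum partial parallel class has size `ρ`. -/
noncomputable def beta (ρ v k : ℕ) : ℕ :=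
  sSup {b | ∃ B : Finset (Finset (Fin v)),
    IsPacking v k B ∧ MaxPPCSize B ρ ∧ B.card = b}

/-- The packing number `D(v,k)`. -/
noncomputable def packingNumber (v k : ℕ) : ℕ :=
  sSup {b | ∃ B : Finset (Finset (Fin v)), IsPacking v k B ∧ B.card = b}

open Finset

def IsLinearFamily {α : Type*} [DecidableEq α] (B : Finset (Finset α)) : Prop :=
  (B : Set (Finset α)).Pairwise fun b₁ b₂ => #(b₁ ∩ b₂) ≤ 1

section LinearFamily

variable {α : Type*} [DecidableEq α] {B : Finset (Finset α)} {k : ℕ}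

theorem IsLinearFamily.eq_of_mem_of_mem (hB : IsLinearFamily B) {b₁ b₂ : Finset α}
    (h₁ : b₁ ∈ B) (h₂ : b₂ ∈ B) {x y : α} (hxy : x ≠ y)
    (hx₁ : x ∈ b₁) (hy₁ : y ∈ b₁) (hx₂ : x ∈ b₂) (hy₂ : y ∈ b₂) : b₁ = b₂ := by
  by_contra hne
  exact hxy <| card_le_one.1 (hB h₁ h₂ hne) x (mem_inter.2 ⟨hx₁, hx₂⟩) y (mem_inter.2 ⟨hy₁, hy₂⟩)

theorem IsLinearFamily.card_filter_mem_mul_le [Fintype α] (hB : IsLinearFamily B)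
    (hcard : ∀ b ∈ B, #b = k) (x : α) :
    #{b ∈ B | x ∈ b} * (k - 1) ≤ Fintype.card α - 1 := by
  have key := card_mul_le_card_mul (fun b p => p ∈ b) (s := {b ∈ B | x ∈ b})
    (t := univ.erase x) (m := k - 1) (n := 1) ?_ ?_
  · simpa [card_erase_of_mem] using key
  · intro b hb
    rw [mem_filter] at hb
    have : bipartiteAbove (fun b p => p ∈ b) (univ.erase x) b = b.erase x := by
      ext p; simp [bipartiteAbove, and_comm]
    rw [this, card_erase_of_mem hb.2, hcard b hb.1]
  · intro p hp
    refine card_le_one.2 fun b₁ h₁ b₂ h₂ => ?_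
    simp only [mem_bipartiteBelow, mem_filter] at h₁ h₂
    exact hB.eq_of_mem_of_mem h₁.1.1 h₂.1.1 (ne_of_mem_erase hp).symm h₁.1.2 h₁.2 h₂.1.2 h₂.2

theorem IsLinearFamily.forall_mem_of_card_filter_mem_gt (hB : IsLinearFamily B)
    (hI : (B : Set (Finset α)).Intersecting) (hcard : ∀ b ∈ B, #b = k) {x : α}
    (hx : k < #{b ∈ B | x ∈ b}) : ∀ b ∈ B, x ∈ b := by
  intro b hb
  by_contra hxb
  have hle : #{c ∈ B | x ∈ c} ≤ #b := by
    refine card_le_card_of_forall_subsingleton (fun c p => p ∈ c) (fun c hc => ?_) ?_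
    · rw [mem_filter] at hc
      obtain ⟨p, hpc, hpb⟩ := not_disjoint_iff.1 (hI hc.1 hb)
      exact ⟨p, hpb, hpc⟩
    · intro p hp c₁ h₁ c₂ h₂
      simp only [mem_filter, Set.mem_ofPred_eq] at h₁ h₂
      exact hB.eq_of_mem_of_mem h₁.1.1 h₂.1.1 (ne_of_mem_of_not_mem hp hxb).symm
        h₁.1.2 h₁.2 h₂.1.2 h₂.2
  exact (hcard b hb ▸ hle).not_gt hx

theorem card_le_of_intersecting_of_card_filter_mem_le (hI : (B : Set (Finset α)).Intersecting)
    (hcard : ∀ b ∈ B, #b = k) {d : ℕ} (hd : ∀ x, #{b ∈ B | x ∈ b} ≤ d) :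
    #B ≤ k * (d - 1) + 1 := by
  obtain rfl | ⟨b₀, hb₀⟩ := B.eq_empty_or_nonempty
  · simp
  have key := card_mul_le_card_mul (fun b p => p ∈ b) (s := B.erase b₀) (t := b₀)
    (m := 1) (n := d - 1) ?_ ?_
  · rw [← card_erase_add_one hb₀, ← hcard b₀ hb₀]
    simpa using key
  · intro b hb
    obtain ⟨p, hpb, hpb₀⟩ := not_disjoint_iff.1 (hI (mem_of_mem_erase hb) hb₀)
    exact one_le_card.2 ⟨p, by simp [bipartiteAbove, hpb, hpb₀]⟩
  · intro p hp
    have : bipartiteBelow (fun b p => p ∈ b) (B.erase b₀) p = {b ∈ B | p ∈ b}.erase b₀ := by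
      ext b; simp [bipartiteBelow, and_assoc]
    rw [this, card_erase_of_mem (mem_filter.2 ⟨hb₀, hp⟩)]
    exact Nat.sub_le_sub_right (hd p) 1

theorem IsLinearFamily.card_mul_le_or_card_le [Fintype α] (hB : IsLinearFamily B)
    (hI : (B : Set (Finset α)).Intersecting) (hcard : ∀ b ∈ B, #b = k) :
    #B * (k - 1) ≤ Fintype.card α - 1 ∨ #B ≤ k * (k - 1) + 1 := by
  by_cases h : ∃ x, k < #{b ∈ B | x ∈ b}
  · obtain ⟨x, hx⟩ := h
    left
    rw [← filter_true_of_mem (hB.forall_mem_of_card_filter_mem_gt hI hcard hx)]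
    exact hB.card_filter_mem_mul_le hcard x
  · push Not at h
    exact Or.inr (card_le_of_intersecting_of_card_filter_mem_le hI hcard h)

end LinearFamily

section StarFamily

variable {α ι β : Type*} [DecidableEq α] [Fintype β] {z : α} {f : ι × β → α}

theorem eq_of_mem_insert_image_of_mem_insert_image (hf : f.Injective) (hz : z ∉ Set.range f)
    {i i' : ι} (hii' : i ≠ i') {p : α}
    (hp : p ∈ insert z (univ.image fun j => f (i, j)))
    (hp' : p ∈ insert z (univ.image fun j => f (i', j))) : p = z := by
  simp only [mem_insert, mem_image, mem_univ, true_and] at hp hp'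
  obtain rfl | ⟨j, rfl⟩ := hp
  · rfl
  obtain h | ⟨j', h⟩ := hp'
  · exact absurd ⟨_, h⟩ hz
  · exact absurd (Prod.mk.inj (hf h)).1 hii'.symm

variable [Fintype ι]

def starFamily (z : α) (f : ι × β → α) : Finset (Finset α) :=
  univ.image fun i => insert z (univ.image fun j => f (i, j))

theorem intersecting_starFamily : (starFamily z f : Set (Finset α)).Intersecting := by
  simp only [starFamily, coe_image, coe_univ, Set.image_univ]
  rintro _ ⟨i, rfl⟩ _ ⟨i', rfl⟩
  exact not_disjoint_iff.2 ⟨z, mem_insert_self _ _, mem_insert_self _ _⟩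

theorem card_of_mem_starFamily (hf : f.Injective) (hz : z ∉ Set.range f) {b : Finset α}
    (hb : b ∈ starFamily z f) : #b = Fintype.card β + 1 := by
  obtain ⟨i, -, rfl⟩ := mem_image.1 hb
  rw [card_insert_of_notMem (by simpa using fun j => (hz ⟨(i, j), ·⟩)),
    card_image_of_injective _ fun _ _ h => (Prod.mk.inj (hf h)).2, card_univ]

theorem isLinearFamily_starFamily (hf : f.Injective) (hz : z ∉ Set.range f) :
    IsLinearFamily (starFamily z f) := by
  rintro _ hb _ hb' hne
  obtain ⟨i, -, rfl⟩ := mem_image.1 hb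
  obtain ⟨i', -, rfl⟩ := mem_image.1 hb'
  have hii' : i ≠ i' := by rintro rfl; exact hne rfl
  refine card_le_one.2 fun p hp q hq => ?_
  rw [mem_inter] at hp hq
  rw [eq_of_mem_insert_image_of_mem_insert_image hf hz hii' hp.1 hp.2,
    eq_of_mem_insert_image_of_mem_insert_image hf hz hii' hq.1 hq.2]

theorem card_starFamily [Nonempty β] (hf : f.Injective) (hz : z ∉ Set.range f) :
    #(starFamily z f) = Fintype.card ι := by
  refine card_image_of_injective _ fun i i' h => ?_
  by_contra hii'
  obtain ⟨j⟩ := ‹Nonempty β›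
  have hi : f (i, j) ∈ insert z (univ.image fun j => f (i, j)) := by simp
  exact hz ⟨(i, j), eq_of_mem_insert_image_of_mem_insert_image hf hz hii' hi (h ▸ hi)⟩

end StarFamily

section Packing

variable {v k : ℕ} {B : Finset (Finset (Fin v))}

theorem IsPacking.isLinearFamily (hP : IsPacking v k B) : IsLinearFamily B :=
  fun _ h₁ _ h₂ hne => hP.2 _ h₁ _ h₂ hne

theorem maxPPCSize_one_of_intersecting (hne : B.Nonempty)
    (hI : (B : Set (Finset (Fin v))).Intersecting) : MaxPPCSize B 1 := by
  obtain ⟨b, hb⟩ := hne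
  refine ⟨⟨{b}, ⟨singleton_subset_iff.2 hb, fun b₁ h₁ b₂ h₂ hne => ?_⟩, card_singleton b⟩,
    fun P hP => card_le_one.2 fun b₁ h₁ b₂ h₂ => ?_⟩
  · exact absurd ((mem_singleton.1 h₁).trans (mem_singleton.1 h₂).symm) hne
  · by_contra hne
    exact hI (hP.1 h₁) (hP.1 h₂) (hP.2 _ h₁ _ h₂ hne)

theorem MaxPPCSize.intersecting_of_one (hM : MaxPPCSize B 1) (hB : ∀ b ∈ B, b.Nonempty) :
    (B : Set (Finset (Fin v))).Intersecting := by
  intro b₁ h₁ b₂ h₂ hd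
  obtain rfl | hne := eq_or_ne b₁ b₂
  · exact (hB b₁ h₁).ne_empty (disjoint_self.1 hd)
  have hPPC : IsPPC B {b₁, b₂} := by
    refine ⟨insert_subset_iff.2 ⟨h₁, singleton_subset_iff.2 h₂⟩, fun c₁ hc₁ c₂ hc₂ hc => ?_⟩
    simp only [mem_insert, mem_singleton] at hc₁ hc₂
    rcases hc₁ with rfl | rfl <;> rcases hc₂ with rfl | rfl
    exacts [absurd rfl hc, hd, hd.symm, absurd rfl hc]
  have := hM.2 _ hPPC
  rw [card_pair hne] at this
  omega

theorem IsPacking.card_le_of_maxPPCSize_one (hk : 2 ≤ k) (hv : k * (k - 1) ^ 2 + k ≤ v)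
    (hP : IsPacking v k B) (hM : MaxPPCSize B 1) : #B ≤ (v - 1) / (k - 1) := by
  have hI := hM.intersecting_of_one fun b hb => card_pos.1 (by rw [hP.1 b hb]; omega)
  rw [Nat.le_div_iff_mul_le (by omega)]
  rcases hP.isLinearFamily.card_mul_le_or_card_le hI hP.1 with h | h
  · simpa using h
  · have hexp : (k * (k - 1) + 1) * (k - 1) + 1 = k * (k - 1) ^ 2 + k := by
      obtain ⟨n, rfl⟩ : ∃ n, k = n + 1 := ⟨k - 1, by omega⟩
      simp only [Nat.add_sub_cancel]
      ring
    have := Nat.mul_le_mul_right (k - 1) h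
    omega

theorem exists_isPacking_maxPPCSize_one_card_eq (hk : 2 ≤ k) {m : ℕ} (hm : 0 < m)
    (hmv : m * (k - 1) + 1 ≤ v) : ∃ B, IsPacking v k B ∧ MaxPPCSize B 1 ∧ #B = m := by
  have : Nonempty (Fin (k - 1)) := ⟨⟨0, by omega⟩⟩
  let f : Fin m × Fin (k - 1) → Fin v := fun p => Fin.castLE hmv (finProdFinEquiv p).succ
  have hf : f.Injective := fun p q h =>
    finProdFinEquiv.injective (Fin.succ_injective _ (Fin.castLE_injective hmv h))
  have hz : (⟨0, by omega⟩ : Fin v) ∉ Set.range f := by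
    rintro ⟨p, hp⟩
    simp [f, Fin.ext_iff] at hp
  refine ⟨starFamily ⟨0, by omega⟩ f, ⟨fun b hb => ?_, isLinearFamily_starFamily hf hz⟩,
    maxPPCSize_one_of_intersecting ?_ intersecting_starFamily, ?_⟩
  · rw [card_of_mem_starFamily hf hz hb, Fintype.card_fin]
    omega
  · rwa [← card_pos, card_starFamily hf hz, Fintype.card_fin]
  · rw [card_starFamily hf hz, Fintype.card_fin]

end Packing

theorem stmt18_general (k v : ℕ) (hk : 2 ≤ k)
    (hv : k * (k - 1) ^ 2 + k ≤ v) :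
    beta 1 v k = (v - 1) / (k - 1) := by
  refine IsGreatest.csSup_eq ⟨exists_isPacking_maxPPCSize_one_card_eq hk ?_ ?_, ?_⟩
  · exact Nat.div_pos (by omega) (by omega)
  · have := Nat.div_mul_le_self (v - 1) (k - 1)
    omega
  · rintro _ ⟨B, hP, hM, rfl⟩
    exact hP.card_le_of_maxPPCSize_one hk hv hM

theorem stmt18 (k v : ℕ) (hk : 2 ≤ k) (hmod : v % (k - 1) = 1 % (k - 1))
    (hv : k * (k - 1) ^ 2 + k ≤ v) :
    beta 1 v k = (v - 1) / (k - 1) :=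
  stmt18_general k v hk hv
end

section
/- For every k ≥ 2, if v ≡ 2 (mod k−1) and v ≥ k(k−1)² + 2k, then (2v−4)/(k−1) ≤ β(2,v,k) ≤ (2v−4)/(k−1) + k² − 2. -/
/-!
Fix two disjoint blocks `b₁, b₂`. By maximality every other block meets `b₁ ∪ b₂`, and at
most `k²` blocks meet both, since two points determine a block. The blocks meeting only
`b₁` pairwise intersect (else they form three disjoint blocks with `b₂`). If they all pass
through one point `x ∈ b₁`, they are disjoint off `x` inside the `v - 2k` points outside
`b₁ ∪ b₂`, so there are at most `(v - 2k)/(k - 1)` of them. Otherwise each `y ∈ b₁` is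
missed by one of them, `c`, and the blocks through `y` meet `c` in distinct points outside
`b₁`, so there are at most `k (k - 1)`, which is smaller once `v ≥ k(k-1)² + 2k`.

For the lower bound, in the cyclic construction every block contains `∞₁` or `∞₂`, so no
three blocks are pairwise disjoint.
-/

open Finset

variable {v k : ℕ} {B : Finset (Finset (Fin v))}

lemma isPPC_iff_pairwise {P : Finset (Finset (Fin v))} :
    IsPPC B P ↔ P ⊆ B ∧ (P : Set (Finset (Fin v))).Pairwise Disjoint :=
  Iff.rfl

lemma IsPPC.card_le_of_forall_exists_mem {P : Finset (Finset (Fin v))} (hP : IsPPC B P)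
    {T : Finset (Fin v)} (hT : ∀ b ∈ B, ∃ x ∈ T, x ∈ b) : P.card ≤ T.card := by
  refine card_le_card_of_forall_subsingleton (fun b x => x ∈ b)
    (fun b hb => hT b (hP.1 hb)) ?_
  rintro x - a ⟨ha, hxa⟩ b ⟨hb, hxb⟩
  by_contra hab
  exact disjoint_left.1 (hP.2 a ha b hb hab) hxa hxb

lemma not_disjoint_of_forall_isPPC_card_le_two (hmax : ∀ P, IsPPC B P → P.card ≤ 2)
    {a b c : Finset (Fin v)} (ha : a ∈ B) (hb : b ∈ B) (hc : c ∈ B) (ha₀ : a.Nonempty)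
    (hb₀ : b.Nonempty) (hab : Disjoint a b) (hac : Disjoint a c) : ¬Disjoint b c := by
  intro hbc
  have hP : IsPPC B {a, b, c} := by
    rw [isPPC_iff_pairwise]
    refine ⟨by simp [insert_subset_iff, ha, hb, hc], ?_⟩
    simp [Set.pairwise_insert_of_symm, hab, hac, hbc]
  have h3 : ({a, b, c} : Finset (Finset (Fin v))).card = 3 :=
    card_eq_three.2 ⟨a, b, c, hab.ne ha₀.ne_empty, hac.ne ha₀.ne_empty,
      hbc.ne hb₀.ne_empty, rfl⟩
  have := hmax _ hP
  omega

namespace IsPacking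

lemma nonempty (hB : IsPacking v k B) (hk : 0 < k) {b : Finset (Fin v)} (hb : b ∈ B) :
    b.Nonempty :=
  card_pos.1 (hB.1 b hb ▸ hk)

lemma eq_of_mem_of_mem (hB : IsPacking v k B) {a b : Finset (Fin v)} (ha : a ∈ B) (hb : b ∈ B)
    {x y : Fin v} (hxy : x ≠ y) (hxa : x ∈ a) (hya : y ∈ a) (hxb : x ∈ b) (hyb : y ∈ b) :
    a = b := by
  by_contra hab
  exact hxy (card_le_one.1 (hB.2 a ha b hb hab) x (mem_inter.2 ⟨hxa, hxb⟩) y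
    (mem_inter.2 ⟨hya, hyb⟩))

lemma card_filter_not_disjoint_le (hB : IsPacking v k B) {b₁ b₂ : Finset (Fin v)}
    (h : Disjoint b₁ b₂) :
    (B.filter fun b => ¬Disjoint b b₁ ∧ ¬Disjoint b b₂).card ≤ b₁.card * b₂.card := by
  rw [← card_product]
  refine card_le_card_of_forall_subsingleton (fun b p => p.1 ∈ b ∧ p.2 ∈ b) ?_ ?_
  · intro b hb
    obtain ⟨-, h₁, h₂⟩ := mem_filter.1 hb
    obtain ⟨x, hxb, hx⟩ := not_disjoint_iff.1 h₁
    obtain ⟨y, hyb, hy⟩ := not_disjoint_iff.1 h₂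
    exact ⟨(x, y), mem_product.2 ⟨hx, hy⟩, hxb, hyb⟩
  · rintro ⟨x, y⟩ hxy a ⟨ha, hxa, hya⟩ b ⟨hb, hxb, hyb⟩
    obtain ⟨hx, hy⟩ := mem_product.1 hxy
    exact hB.eq_of_mem_of_mem (mem_filter.1 ha).1 (mem_filter.1 hb).1
      (ne_of_mem_of_not_mem hx (disjoint_right.1 h hy)) hxa hya hxb hyb

lemma card_mul_le_of_forall_mem (hB : IsPacking v k B) {F : Finset (Finset (Fin v))}
    (hF : F ⊆ B) {x : Fin v} {S : Finset (Fin v)} (hxS : x ∉ S) (hFx : ∀ a ∈ F, x ∈ a)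
    (hFS : ∀ a ∈ F, a ⊆ insert x S) : F.card * (k - 1) ≤ S.card := by
  have := card_mul_le_card_mul (fun a z => z ∈ a) (s := F) (t := S) (m := k - 1) (n := 1) ?_ ?_
  · simpa using this
  · intro a ha
    rw [← hB.1 a (hF ha), ← card_erase_of_mem (hFx a ha)]
    refine card_le_card fun z hz => mem_filter.2 ⟨?_, mem_of_mem_erase hz⟩
    exact (mem_insert.1 (hFS a ha (mem_of_mem_erase hz))).resolve_left (ne_of_mem_erase hz)
  · intro z hz
    refine card_le_one.2 fun a ha b hb => ?_
    obtain ⟨ha, hza⟩ := mem_filter.1 ha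
    obtain ⟨hb, hzb⟩ := mem_filter.1 hb
    exact hB.eq_of_mem_of_mem (hF ha) (hF hb) (ne_of_mem_of_not_mem hz hxS) hza (hFx a ha)
      hzb (hFx b hb)

lemma card_le_card_sdiff_of_forall_mem (hB : IsPacking v k B) {F : Finset (Finset (Fin v))}
    (hF : F ⊆ B) {b c : Finset (Fin v)} {y : Fin v} (hb : b ∈ B) (hyb : y ∈ b) (hyc : y ∉ c)
    (hFy : ∀ a ∈ F, y ∈ a) (hFb : ∀ a ∈ F, a ≠ b) (hFc : ∀ a ∈ F, ¬Disjoint a c) :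
    F.card ≤ (c \ b).card := by
  refine card_le_card_of_forall_subsingleton (fun a z => z ∈ a) ?_ ?_
  · intro a ha
    obtain ⟨z, hza, hzc⟩ := not_disjoint_iff.1 (hFc a ha)
    refine ⟨z, mem_sdiff.2 ⟨hzc, fun hzb => hFb a ha ?_⟩, hza⟩
    exact hB.eq_of_mem_of_mem (hF ha) hb (ne_of_mem_of_not_mem hzc hyc) hza (hFy a ha) hzb hyb
  · rintro z hz a ⟨ha, hza⟩ a' ⟨ha', hza'⟩
    exact hB.eq_of_mem_of_mem (hF ha) (hF ha') (ne_of_mem_of_not_mem (mem_sdiff.1 hz).1 hyc)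
      hza (hFy a ha) hza' (hFy a' ha')

lemma card_le_mul_of_forall_exists_not_mem (hB : IsPacking v k B)
    {A : Finset (Finset (Fin v))} (hA : A ⊆ B) {b : Finset (Fin v)} (hb : b ∈ B)
    (hAb : ∀ a ∈ A, a ≠ b) (hmeet : ∀ a ∈ A, ¬Disjoint a b)
    (hint : ∀ a ∈ A, ∀ c ∈ A, a ≠ c → ¬Disjoint a c) (hmiss : ∀ y ∈ b, ∃ c ∈ A, y ∉ c) :
    A.card ≤ k * (k - 1) := by
  have := card_mul_le_card_mul (fun a z => z ∈ a) (s := A) (t := b) (m := 1) (n := k - 1)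
    (fun a ha => one_le_card.2 ?_) (fun y hy => ?_)
  · rwa [mul_one, hB.1 b hb] at this
  · obtain ⟨z, hza, hz⟩ := not_disjoint_iff.1 (hmeet a ha)
    exact ⟨z, mem_filter.2 ⟨hz, hza⟩⟩
  · obtain ⟨c, hc, hyc⟩ := hmiss y hy
    refine (hB.card_le_card_sdiff_of_forall_mem ((filter_subset _ _).trans hA) hb hy hyc
      (fun a ha => (mem_filter.1 ha).2) (fun a ha => hAb a (mem_filter.1 ha).1)
      (fun a ha => hint a (mem_filter.1 ha).1 c hc ?_)).trans ?_
    · exact ne_of_mem_of_not_mem' (mem_filter.1 ha).2 hyc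
    · rw [card_sdiff, hB.1 c (hA hc)]
      have := card_pos.2 (not_disjoint_iff_nonempty_inter.1 (hmeet c hc))
      rw [inter_comm] at this
      omega

end IsPacking

lemma card_filter_disjoint_le (hk : 2 ≤ k) (hB : IsPacking v k B)
    (hmax : ∀ P, IsPPC B P → P.card ≤ 2) {b₁ b₂ : Finset (Fin v)} (hb₁ : b₁ ∈ B)
    (hb₂ : b₂ ∈ B) (h : Disjoint b₁ b₂) :
    (B.filter fun b => b ≠ b₁ ∧ Disjoint b b₂).card ≤
      max ((v - 2 * k) / (k - 1)) (k * (k - 1)) := by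
  set A := B.filter fun b => b ≠ b₁ ∧ Disjoint b b₂
  have hAB : A ⊆ B := filter_subset _ _
  have hAb₁ : ∀ a ∈ A, a ≠ b₁ := fun a ha => (mem_filter.1 ha).2.1
  have hAb₂ : ∀ a ∈ A, Disjoint a b₂ := fun a ha => (mem_filter.1 ha).2.2
  have hne : ∀ b ∈ B, b.Nonempty := fun b hb => hB.nonempty (by omega) hb
  have hmeet : ∀ a ∈ A, ¬Disjoint a b₁ := fun a ha had =>
    not_disjoint_of_forall_isPPC_card_le_two hmax hb₂ (hAB ha) hb₁ (hne b₂ hb₂)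
      (hne a (hAB ha)) (hAb₂ a ha).symm h.symm had
  have hint : ∀ a ∈ A, ∀ c ∈ A, a ≠ c → ¬Disjoint a c := fun a ha c hc hac had =>
    not_disjoint_of_forall_isPPC_card_le_two hmax hb₂ (hAB ha) (hAB hc) (hne b₂ hb₂)
      (hne a (hAB ha)) (hAb₂ a ha).symm (hAb₂ c hc).symm had
  by_cases hsun : ∃ x ∈ b₁, ∀ a ∈ A, x ∈ a
  · obtain ⟨x, hx, hxA⟩ := hsun
    refine le_max_of_le_left ((Nat.le_div_iff_mul_le (by omega)).2 ?_)
    have hS : (b₁ ∪ b₂)ᶜ.card = v - 2 * k := by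
      rw [card_compl, card_union_of_disjoint h, hB.1 b₁ hb₁, hB.1 b₂ hb₂, Fintype.card_fin,
        two_mul]
    refine hS ▸ hB.card_mul_le_of_forall_mem hAB (by simp [hx]) hxA fun a ha z hza => ?_
    rw [mem_insert, mem_compl, mem_union, or_iff_not_imp_left]
    refine fun hzx hz => hz.elim (fun hz₁ => hAb₁ a ha ?_)
      (disjoint_left.1 (hAb₂ a ha) hza)
    exact hB.eq_of_mem_of_mem (hAB ha) hb₁ hzx hza (hxA a ha) hz₁ hx
  · push Not at hsun
    exact le_max_of_le_right <|
      hB.card_le_mul_of_forall_exists_not_mem hAB hb₁ hAb₁ hmeet hint hsun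

theorem card_le_of_maxPPCSize_two (hk : 2 ≤ k) (hB : IsPacking v k B) (hM : MaxPPCSize B 2) :
    B.card ≤ 2 + k ^ 2 + 2 * max ((v - 2 * k) / (k - 1)) (k * (k - 1)) := by
  obtain ⟨⟨P, hP, hP₂⟩, hmax⟩ := hM
  obtain ⟨b₁, b₂, hb, rfl⟩ := card_eq_two.1 hP₂
  have hb₁ : b₁ ∈ B := hP.1 (by simp)
  have hb₂ : b₂ ∈ B := hP.1 (by simp)
  have h : Disjoint b₁ b₂ := hP.2 b₁ (by simp) b₂ (by simp) hb
  set M := B.filter fun b => ¬Disjoint b b₁ ∧ ¬Disjoint b b₂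
  set A₁ := B.filter fun b => b ≠ b₁ ∧ Disjoint b b₂
  set A₂ := B.filter fun b => b ≠ b₂ ∧ Disjoint b b₁
  have hsub : B ⊆ {b₁, b₂} ∪ M ∪ A₁ ∪ A₂ := by
    intro b hb
    simp only [M, A₁, A₂, mem_union, mem_insert, mem_singleton, mem_filter]
    tauto
  have hM : M.card ≤ k ^ 2 := by
    simpa [hB.1 b₁ hb₁, hB.1 b₂ hb₂, ← sq] using hB.card_filter_not_disjoint_le h
  have hA₁ : A₁.card ≤ _ := card_filter_disjoint_le hk hB hmax hb₁ hb₂ h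
  have hA₂ : A₂.card ≤ _ := card_filter_disjoint_le hk hB hmax hb₂ hb₁ h.symm
  calc B.card ≤ ({b₁, b₂} ∪ M ∪ A₁ ∪ A₂).card := card_le_card hsub
    _ ≤ ({b₁, b₂} : Finset (Finset (Fin v))).card + M.card + A₁.card + A₂.card := by
      grw [card_union_le, card_union_le, card_union_le]
    _ ≤ 2 + k ^ 2 + 2 * max ((v - 2 * k) / (k - 1)) (k * (k - 1)) := by
      grw [card_le_two]
      omega

section CyclicConstruction

variable {t m : ℕ}

/-- The points `(ℤ_t × {1,…,k-1}) ∪ {∞₁, ∞₂}` are encoded as `Fin t × Fin m ⊕ Bool`;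
the block `graphBlock s f` consists of `∞_s` and the graph of `f`. -/
def graphBlock (s : Bool) (f : Fin m → Fin t) : Finset (Fin t × Fin m ⊕ Bool) :=
  insert (.inr s) (univ.image fun j => .inl (f j, j))

lemma card_graphBlock (s : Bool) (f : Fin m → Fin t) : (graphBlock s f).card = m + 1 := by
  rw [graphBlock, card_insert_of_notMem (by simp),
    card_image_of_injective _ fun j j' h => (Prod.ext_iff.1 (Sum.inl_injective h)).2,
    card_univ, Fintype.card_fin]

lemma mem_graphBlock_inter {s s' : Bool} {f g : Fin m → Fin t} {x : Fin t × Fin m ⊕ Bool} :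
    x ∈ graphBlock s f ∩ graphBlock s' g ↔
      (x = .inr s ∧ s = s') ∨ ∃ j, f j = g j ∧ x = .inl (f j, j) := by
  simp only [graphBlock, mem_inter, mem_insert, mem_image, mem_univ, true_and]
  constructor
  · rintro ⟨rfl | ⟨j, rfl⟩, h | ⟨j', h⟩⟩
    · exact Or.inl ⟨rfl, Sum.inr_injective h⟩
    · simp at h
    · simp at h
    · obtain ⟨hj, rfl⟩ := Prod.ext_iff.1 (Sum.inl_injective h)
      exact Or.inr ⟨j', hj.symm, rfl⟩
  · rintro (⟨rfl, rfl⟩ | ⟨j, hj, rfl⟩)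
    · simp
    · exact ⟨Or.inr ⟨j, rfl⟩, Or.inr ⟨j, by rw [hj]⟩⟩

lemma card_graphBlock_inter_le_one {s s' : Bool} {f g : Fin m → Fin t}
    (hs : s = s' → ∀ j, f j ≠ g j) (hfg : ∀ j j', f j = g j → f j' = g j' → j = j') :
    (graphBlock s f ∩ graphBlock s' g).card ≤ 1 := by
  refine card_le_one.2 fun x hx y hy => ?_
  rcases mem_graphBlock_inter.1 hx with ⟨rfl, rfl⟩ | ⟨j, hj, rfl⟩ <;>
    rcases mem_graphBlock_inter.1 hy with ⟨rfl, hss⟩ | ⟨j', hj', rfl⟩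
  · rfl
  · exact absurd hj' (hs rfl j')
  · exact absurd hj (hs hss j)
  · rw [hfg j j' hj hj']

lemma disjoint_graphBlock {s s' : Bool} {f g : Fin m → Fin t} (hs : s ≠ s')
    (hfg : ∀ j, f j ≠ g j) : Disjoint (graphBlock s f) (graphBlock s' g) := by
  refine disjoint_iff_ne.2 fun x hx y hy hxy => ?_
  subst hxy
  rcases mem_graphBlock_inter.1 (mem_inter.2 ⟨hx, hy⟩) with ⟨-, h⟩ | ⟨j, hj, -⟩
  exacts [hs h, hfg j hj]

variable (hmt : m ≤ t)

def cyclicFun (s : Bool) (i : Fin t) (j : Fin m) : Fin t :=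
  if s then i + Fin.castLE hmt j else i

/-- `cyclicBlock (false, i)` and `cyclicBlock (true, i)` are the translates by `i` of the base
blocks `{(0,1), …, (0,k-1), ∞₁}` and `{(0,1), (1,2), …, (k-2,k-1), ∞₂}`. -/
def cyclicBlock (p : Bool × Fin t) : Finset (Fin t × Fin m ⊕ Bool) :=
  graphBlock p.1 (cyclicFun hmt p.1 p.2)

lemma card_cyclicBlock (p : Bool × Fin t) : (cyclicBlock hmt p).card = m + 1 :=
  card_graphBlock _ _

lemma card_cyclicBlock_inter_le_one {p q : Bool × Fin t} (hpq : p ≠ q) :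
    (cyclicBlock hmt p ∩ cyclicBlock hmt q).card ≤ 1 := by
  obtain ⟨s, i⟩ := p
  obtain ⟨s', i'⟩ := q
  have hcast : ∀ {a b : Fin t} {j j' : Fin m}, a + Fin.castLE hmt j = b →
      a + Fin.castLE hmt j' = b → j = j' := fun hj hj' =>
    Fin.castLE_injective hmt (add_left_cancel (hj.trans hj'.symm))
  refine card_graphBlock_inter_le_one (fun hs j => ?_) fun j j' hj hj' => ?_
  · subst hs
    have hi : i ≠ i' := fun h => hpq (by rw [h])
    cases s <;> simp [cyclicFun, hi]
  · cases s <;> cases s'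
    · simp_all [cyclicFun]
    · exact hcast hj.symm hj'.symm
    · exact hcast hj hj'
    · simp_all [cyclicFun]

def cyclicPacking (e : Fin t × Fin m ⊕ Bool ↪ Fin v) : Finset (Finset (Fin v)) :=
  univ.image fun p : Bool × Fin t => (cyclicBlock hmt p).map e

variable (e : Fin t × Fin m ⊕ Bool ↪ Fin v)

lemma isPacking_cyclicPacking : IsPacking v (m + 1) (cyclicPacking hmt e) := by
  constructor
  · intro b hb
    obtain ⟨p, -, rfl⟩ := mem_image.1 hb
    rw [card_map, card_cyclicBlock]
  · intro b hb b' hb' hne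
    obtain ⟨p, -, rfl⟩ := mem_image.1 hb
    obtain ⟨q, -, rfl⟩ := mem_image.1 hb'
    rw [← map_inter, card_map]
    exact card_cyclicBlock_inter_le_one hmt fun h => hne (h ▸ rfl)

lemma card_cyclicPacking (hm : 0 < m) : (cyclicPacking hmt e).card = 2 * t := by
  rw [cyclicPacking, card_image_of_injective, card_univ, Fintype.card_prod, Fintype.card_bool,
    Fintype.card_fin]
  intro p q hpq
  by_contra hne
  have := card_cyclicBlock_inter_le_one hmt hne
  rw [map_injective e hpq, inter_self, card_cyclicBlock] at this
  omega

lemma maxPPCSize_cyclicPacking (hlt : m < t) : MaxPPCSize (cyclicPacking hmt e) 2 := by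
  have : NeZero t := ⟨by omega⟩
  set b₁ := (cyclicBlock hmt (false, ⟨m, hlt⟩)).map e
  set b₂ := (cyclicBlock hmt (true, 0)).map e
  have hb₁ : b₁ ∈ cyclicPacking hmt e :=
    mem_image.2 ⟨(false, ⟨m, hlt⟩), mem_univ _, rfl⟩
  have hb₂ : b₂ ∈ cyclicPacking hmt e := mem_image.2 ⟨(true, 0), mem_univ _, rfl⟩
  have h : Disjoint b₁ b₂ := by
    refine (disjoint_map e).2 (disjoint_graphBlock Bool.false_ne_true fun j hj => ?_)
    have := congrArg Fin.val hj
    simp only [cyclicFun, Bool.false_eq_true, if_false, if_true, zero_add, Fin.val_castLE] at this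
    exact absurd j.2 (by omega)
  have hne : b₁ ≠ b₂ := h.ne (map_nonempty.2 (insert_nonempty _ _)).ne_empty
  refine ⟨⟨{b₁, b₂}, ?_, card_pair hne⟩, fun P hP => ?_⟩
  · rw [isPPC_iff_pairwise]
    refine ⟨by simp [insert_subset_iff, hb₁, hb₂], ?_⟩
    simp [Set.pairwise_insert_of_symm, h]
  · refine (hP.card_le_of_forall_exists_mem (T := univ.map (Function.Embedding.inr.trans e))
      fun b hb => ?_).trans (by simp)
    obtain ⟨p, -, rfl⟩ := mem_image.1 hb
    exact ⟨e (.inr p.1), by simp, mem_map_of_mem e (mem_insert_self _ _)⟩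

end CyclicConstruction

lemma le_beta {ρ : ℕ} (hB : IsPacking v k B) (hM : MaxPPCSize B ρ) : B.card ≤ beta ρ v k :=
  le_csSup ⟨Fintype.card (Finset (Fin v)), by rintro _ ⟨B, -, -, rfl⟩; exact card_le_univ B⟩
    ⟨B, hB, hM, rfl⟩

lemma beta_le {ρ n : ℕ} (h : ∀ B, IsPacking v k B → MaxPPCSize B ρ → B.card ≤ n) :
    beta ρ v k ≤ n :=
  csSup_le' <| by rintro _ ⟨B, hB, hM, rfl⟩; exact h B hB hM

theorem stmt19 (k v : ℕ) (hk : 2 ≤ k) (hmod : v % (k - 1) = 2 % (k - 1))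
    (hv : k * (k - 1) ^ 2 + 2 * k ≤ v) :
    (2 * v - 4) / (k - 1) ≤ beta 2 v k ∧
      beta 2 v k ≤ (2 * v - 4) / (k - 1) + k ^ 2 - 2 := by
  obtain ⟨m, rfl⟩ : ∃ m, k = m + 1 := ⟨k - 1, by omega⟩
  have hm : 0 < m := by omega
  simp only [Nat.add_sub_cancel] at hmod hv ⊢
  obtain ⟨t, ht⟩ := (Nat.modEq_iff_dvd' (by nlinarith)).1 hmod.symm
  obtain rfl : v = t * m + 2 := by rw [mul_comm]; omega
  have ht_ge : (m + 1) * m + 2 ≤ t :=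
    Nat.le_of_mul_le_mul_right (by nlinarith) hm
  have h2t : (2 * (t * m + 2) - 4) / m = 2 * t := by
    rw [show 2 * (t * m + 2) - 4 = 2 * t * m by ring_nf; omega, Nat.mul_div_cancel _ hm]
  have htm : (t * m + 2 - 2 * (m + 1)) / m = t - 2 := by
    rw [show t * m + 2 - 2 * (m + 1) = (t - 2) * m by rw [Nat.sub_mul]; omega,
      Nat.mul_div_cancel _ hm]
  rw [h2t]
  constructor
  · have hlt : m < t := by nlinarith
    let e := (Fintype.equivFinOfCardEq (by simp [mul_comm] :
      Fintype.card (Fin t × Fin m ⊕ Bool) = t * m + 2)).toEmbedding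
    rw [← card_cyclicPacking hlt.le e hm]
    exact le_beta (isPacking_cyclicPacking hlt.le e) (maxPPCSize_cyclicPacking hlt.le e hlt)
  · refine beta_le fun B hB hM => (card_le_of_maxPPCSize_two (by omega) hB hM).trans ?_
    rw [Nat.add_sub_cancel, htm, max_eq_left (by omega)]
    omega
end
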